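/- (Lemma 5.2, uniform solution estimates.) There exist constants M, M̃ > 0 and c₀, c̃₀ ≥ 0, all independent of s, such that for every s ∈ ℂ and every x : [0,1] → ℂⁿ for which w := H·x is continuously differentiable and s·x(ζ) = P₁ w′(ζ) + G₀ w(ζ) holds for all ζ ∈ [0,1], one has for all 0 ≤ τ ≤ ζ ≤ 1: M̃·e^{−|Re s|·c̃₀·(ζ−τ)}·‖w(τ)‖ ≤ ‖w(ζ)‖ ≤ M·e^{|Re s|·c₀·(ζ−τ)}·‖w(τ)‖, where ‖·‖ is the Euclidean norm on ℂⁿ. -/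

import Mathlib

/-!
Write `w = Sᴴ v`, i.e. `v = S⁻ᴴ w`. Conjugating `P₁H = S⁻¹ΔS` gives
`P₁⁻¹H⁻¹ = Sᴴ Δ⁻¹ S⁻ᴴ`, so `v` solves `v' = s Δ⁻¹ v + B v` with `B` continuous and independent
of `s`. Since `Δ⁻¹` is Hermitian, `⟪v, Δ⁻¹ v⟫` is real, hence
`|d/dζ ‖v‖²| = 2 |Re ⟪v, v'⟫| ≤ 2 (|Re s| ‖Δ⁻¹‖ + ‖B‖) ‖v‖²`: only `Re s` enters the growth rate.
Grönwall's inequality in both time directions bounds `‖v‖`, and the uniform bounds on `‖S‖` and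
`‖S⁻¹‖` over `[0,1]` transfer this to `‖w‖`.
-/

open Matrix Set Real WithLp
open scoped ComplexOrder Matrix.Norms.L2Operator

theorem mul_exp_le_of_mul_le_deriv {φ φ' : ℝ → ℝ} {b τ ζ : ℝ} (hτζ : τ ≤ ζ)
    (hφ : ∀ t ∈ Icc τ ζ, HasDerivWithinAt φ (φ' t) (Icc τ ζ) t)
    (hb : ∀ t ∈ Icc τ ζ, b * φ t ≤ φ' t) :
    φ τ * exp (b * (ζ - τ)) ≤ φ ζ := by
  set ψ := fun t => φ t * exp (-b * t)
  have hψ : ∀ t ∈ Icc τ ζ,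
      HasDerivWithinAt ψ ((φ' t - b * φ t) * exp (-b * t)) (Icc τ ζ) t := fun t ht =>
    ((hφ t ht).fun_mul ((hasDerivAt_id' t).const_mul (-b)).exp.hasDerivWithinAt).congr_deriv
      (by ring)
  have hψ_mono : MonotoneOn ψ (Icc τ ζ) :=
    monotoneOn_of_hasDerivWithinAt_nonneg (convex_Icc τ ζ)
      (fun t ht => (hψ t ht).continuousWithinAt)
      (fun t ht => (hψ t (interior_subset ht)).mono interior_subset)
      (fun t ht => mul_nonneg (sub_nonneg.2 (hb t (interior_subset ht))) (exp_pos _).le)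
  calc φ τ * exp (b * (ζ - τ)) = ψ τ * exp (b * ζ) := by
        simp only [ψ, mul_assoc, ← exp_add]
        ring_nf
    _ ≤ ψ ζ * exp (b * ζ) := by
        gcongr; exact hψ_mono (left_mem_Icc.2 hτζ) (right_mem_Icc.2 hτζ) hτζ
    _ = φ ζ := by simp [ψ, mul_assoc, ← exp_add]

theorem norm_le_mul_exp_of_abs_inner_deriv_le {F : Type*} [NormedAddCommGroup F]
    [InnerProductSpace ℝ F] {V V' : ℝ → F} {c τ ζ : ℝ} (hτζ : τ ≤ ζ)
    (hV : ∀ t ∈ Icc τ ζ, HasDerivWithinAt V (V' t) (Icc τ ζ) t)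
    (hc : ∀ t ∈ Icc τ ζ, |inner ℝ (V t) (V' t)| ≤ c * ‖V t‖ ^ 2) :
    ‖V ζ‖ ≤ ‖V τ‖ * exp (c * (ζ - τ)) ∧ ‖V τ‖ ≤ ‖V ζ‖ * exp (c * (ζ - τ)) := by
  have hφ := fun t ht => (hV t ht).norm_sq
  have hexp : exp (2 * c * (ζ - τ)) = exp (c * (ζ - τ)) ^ 2 := by
    rw [sq, ← exp_add]; ring_nf
  constructor
  · have := mul_exp_le_of_mul_le_deriv hτζ (fun t ht => (hφ t ht).fun_neg) (b := 2 * c)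
      fun t ht => by linarith [le_abs_self (inner ℝ (V t) (V' t)), hc t ht]
    rw [← pow_le_pow_iff_left₀ (norm_nonneg _) (by positivity) two_ne_zero, mul_pow, ← hexp]
    linarith
  · have := mul_exp_le_of_mul_le_deriv hτζ hφ (b := -(2 * c))
      fun t ht => by linarith [neg_abs_le (inner ℝ (V t) (V' t)), hc t ht]
    rw [← pow_le_pow_iff_left₀ (norm_nonneg _) (by positivity) two_ne_zero, mul_pow, ← hexp]
    have h2 := mul_le_mul_of_nonneg_right this (exp_pos (2 * c * (ζ - τ))).le
    rwa [mul_assoc, ← exp_add, show -(2 * c) * (ζ - τ) + 2 * c * (ζ - τ) = 0 by ring,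
      exp_zero, mul_one] at h2

theorem abs_re_inner_le_of_norm_le {E : Type*} [NormedAddCommGroup E] [InnerProductSpace ℂ E]
    {x y : E} {a : ℝ} (h : ‖y‖ ≤ a * ‖x‖) : |(inner ℂ x y).re| ≤ a * ‖x‖ ^ 2 :=
  calc |(inner ℂ x y).re| ≤ ‖x‖ * ‖y‖ := (Complex.abs_re_le_norm _).trans (norm_inner_le_norm x y)
    _ ≤ ‖x‖ * (a * ‖x‖) := by gcongr
    _ = a * ‖x‖ ^ 2 := by ring

theorem inv_mul_exp_neg_mul_le_of_le_mul_exp {M x y z : ℝ} (hM : 0 < M)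
    (h : y ≤ M * exp x * z) : M⁻¹ * exp (-x) * y ≤ z := by
  rw [mul_assoc, inv_mul_le_iff₀ hM, exp_neg, inv_mul_le_iff₀ (exp_pos x)]
  linarith

theorem continuousOn_matrix {X R m n : Type*} [TopologicalSpace X] [TopologicalSpace R]
    {A : X → Matrix m n R} {s : Set X} (hA : ∀ i j, ContinuousOn (fun x => A x i j) s) :
    ContinuousOn A s :=
  continuousOn_pi.2 fun i => continuousOn_pi.2 (hA i)

theorem continuousOn_matrix_of_hasDerivWithinAt {𝕜 m n : Type*} [NormedAddCommGroup 𝕜]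
    [NormedSpace ℝ 𝕜] {A A' : ℝ → Matrix m n 𝕜} {s : Set ℝ}
    (hA : ∀ i j, ∀ t ∈ s, HasDerivWithinAt (fun ξ => A ξ i j) (A' t i j) s t) :
    ContinuousOn A s :=
  continuousOn_matrix fun i j t ht => (hA i j t ht).continuousWithinAt

section

variable {ι : Type*} [Fintype ι] [DecidableEq ι]

theorem ContinuousOn.matrix_inv {X 𝕜 : Type*} [TopologicalSpace X] [RCLike 𝕜] {s : Set X}
    {A : X → Matrix ι ι 𝕜} (hA : ContinuousOn A s) (hu : ∀ x ∈ s, IsUnit (A x)) :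
    ContinuousOn (fun x => (A x)⁻¹) s := fun x hx =>
  (continuousAt_matrix_inv _ (NormedRing.inverse_continuousAt
    ((isUnit_iff_isUnit_det _).1 (hu x hx)).unit)).comp_continuousWithinAt (hA x hx)

theorem IsCompact.exists_pos_bound_of_continuousOn_matrix {X 𝕜 : Type*} [TopologicalSpace X]
    [RCLike 𝕜] {K : Set X} (hK : IsCompact K) {A : X → Matrix ι ι 𝕜} (hA : ContinuousOn A K) :
    ∃ C > 0, ∀ x ∈ K, ‖A x‖ ≤ C := by
  obtain ⟨C, hC⟩ := hK.exists_bound_of_continuousOn hA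
  exact ⟨max C 1, by positivity, fun x hx => (hC x hx).trans (le_max_left _ _)⟩

omit [DecidableEq ι] in
theorem HasDerivWithinAt.matrix_mulVec {𝕜 : Type*} [NormedCommRing 𝕜] [NormedAlgebra ℝ 𝕜]
    {A : ℝ → Matrix ι ι 𝕜} {A' : Matrix ι ι 𝕜} {v : ℝ → ι → 𝕜} {v' : ι → 𝕜} {s : Set ℝ} {t : ℝ}
    (hA : ∀ i j, HasDerivWithinAt (fun ξ => A ξ i j) (A' i j) s t)
    (hv : HasDerivWithinAt v v' s t) :
    HasDerivWithinAt (fun ξ => A ξ *ᵥ v ξ) (A' *ᵥ v t + A t *ᵥ v') s t := by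
  refine hasDerivWithinAt_pi.2 fun i => ?_
  simpa [Matrix.mulVec, dotProduct, Finset.sum_add_distrib] using
    HasDerivWithinAt.fun_sum fun j _ => (hA i j).mul (hasDerivWithinAt_pi.1 hv j)

theorem inv_mul_inv_eq_of_mul_eq_inv_mul_mul {R : Type*} [CommRing R] [StarRing R]
    {P H S Δ : Matrix ι ι R} (hP : P.IsHermitian) (hH : H.IsHermitian) (hΔ : Δ.IsHermitian)
    (hS : IsUnit S) (h : P * H = S⁻¹ * Δ * S) :
    P⁻¹ * H⁻¹ = Sᴴ * Δ⁻¹ * S⁻¹ᴴ := by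
  have hSdet : IsUnit Sᴴ.det := by
    rw [det_conjTranspose]; exact ((isUnit_iff_isUnit_det S).1 hS).star
  have hHP : H * P = Sᴴ * Δ * S⁻¹ᴴ := by
    simpa only [conjTranspose_mul, hP.eq, hH.eq, hΔ.eq, mul_assoc] using congrArg (·ᴴ) h
  rw [← Matrix.mul_inv_rev, hHP, Matrix.mul_inv_rev, Matrix.mul_inv_rev, conjTranspose_nonsing_inv,
    nonsing_inv_nonsing_inv _ hSdet, mul_assoc]

/-- With `T = (S⁻¹)'ᴴ`, the left side is the derivative of `S⁻ᴴ w` by the product rule. -/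
theorem mulVec_add_conjTranspose_inv_mulVec_eq {R : Type*} [CommRing R] [StarRing R]
    {P H S Δ G : Matrix ι ι R} (T : Matrix ι ι R) {s : R} {x w w' : ι → R}
    (hP : IsUnit P) (hH : IsUnit H) (hS : IsUnit S) (hPH : P⁻¹ * H⁻¹ = Sᴴ * Δ⁻¹ * S⁻¹ᴴ)
    (hw : w = H *ᵥ x) (heq : s • x = P *ᵥ w' + G *ᵥ w) :
    T *ᵥ w + S⁻¹ᴴ *ᵥ w' =
      s • (Δ⁻¹ *ᵥ (S⁻¹ᴴ *ᵥ w)) + (T * Sᴴ - S⁻¹ᴴ * P⁻¹ * G * Sᴴ) *ᵥ (S⁻¹ᴴ *ᵥ w) := by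
  have hSdet := (isUnit_iff_isUnit_det S).1 hS
  have hSS : S⁻¹ᴴ * Sᴴ = 1 := by
    rw [← conjTranspose_mul, mul_nonsing_inv _ hSdet, conjTranspose_one]
  have hSS' : Sᴴ * S⁻¹ᴴ = 1 := by
    rw [← conjTranspose_mul, nonsing_inv_mul _ hSdet, conjTranspose_one]
  have hx : x = H⁻¹ *ᵥ w := by
    rw [hw, mulVec_mulVec, nonsing_inv_mul _ ((isUnit_iff_isUnit_det H).1 hH), one_mulVec]
  have hw' : w' = s • ((P⁻¹ * H⁻¹) *ᵥ w) - (P⁻¹ * G) *ᵥ w := by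
    rw [← mulVec_mulVec, ← hx, ← mulVec_mulVec, ← mulVec_smul, heq, mulVec_add, mulVec_mulVec,
      nonsing_inv_mul _ ((isUnit_iff_isUnit_det P).1 hP), one_mulVec, add_sub_cancel_right]
  rw [hw', hPH, mulVec_sub, mulVec_smul, sub_mulVec]
  simp only [mulVec_mulVec, ← mul_assoc, hSS, one_mul]
  simp only [mul_assoc, hSS', mul_one]
  abel

omit [DecidableEq ι] in
theorem EuclideanSpace.real_inner_toLp_eq_re_inner (v w : ι → ℂ) :
    inner ℝ (toLp 2 v) (toLp 2 w) = (inner ℂ (toLp 2 v) (toLp 2 w)).re := by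
  simp [PiLp.inner_apply, Complex.re_sum]

theorem abs_inner_smul_mulVec_add_mulVec_le {D B : Matrix ι ι ℂ} (hD : D.IsHermitian) (s : ℂ)
    (v : ι → ℂ) :
    |inner ℝ (toLp 2 v) (toLp 2 (s • (D *ᵥ v) + B *ᵥ v))| ≤
      (|s.re| * ‖D‖ + ‖B‖) * ‖toLp 2 v‖ ^ 2 := by
  have hD_real : (inner ℂ (toLp 2 v) (toLp 2 (D *ᵥ v))).im = 0 := by
    simpa [EuclideanSpace.inner_eq_star_dotProduct, dotProduct_comm] using
      hD.im_star_dotProduct_mulVec_self v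
  have hD_le := abs_re_inner_le_of_norm_le (l2_opNorm_mulVec D (toLp 2 v))
  have hB_le := abs_re_inner_le_of_norm_le (l2_opNorm_mulVec B (toLp 2 v))
  rw [EuclideanSpace.real_inner_toLp_eq_re_inner, toLp_add, toLp_smul, inner_add_right,
    inner_smul_right, Complex.add_re, Complex.mul_re, hD_real, mul_zero, sub_zero]
  calc _ ≤ |s.re * (inner ℂ (toLp 2 v) (toLp 2 (D *ᵥ v))).re| +
        |(inner ℂ (toLp 2 v) (toLp 2 (B *ᵥ v))).re| := abs_add_le _ _
    _ ≤ |s.re| * (‖D‖ * ‖toLp 2 v‖ ^ 2) + ‖B‖ * ‖toLp 2 v‖ ^ 2 := by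
        rw [abs_mul]; gcongr; exacts [hD_le, hB_le]
    _ = _ := by ring

theorem norm_toLp_le_mul_exp_of_hasDerivWithinAt {D B : ℝ → Matrix ι ι ℂ} {v : ℝ → ι → ℂ}
    {s : ℂ} {a b τ ζ : ℝ} (hτζ : τ ≤ ζ) (hD : ∀ t ∈ Icc τ ζ, (D t).IsHermitian)
    (hDa : ∀ t ∈ Icc τ ζ, ‖D t‖ ≤ a) (hBb : ∀ t ∈ Icc τ ζ, ‖B t‖ ≤ b)
    (hv : ∀ t ∈ Icc τ ζ, HasDerivWithinAt v (s • (D t *ᵥ v t) + B t *ᵥ v t) (Icc τ ζ) t) :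
    ‖toLp 2 (v ζ)‖ ≤ ‖toLp 2 (v τ)‖ * exp ((|s.re| * a + b) * (ζ - τ)) ∧
      ‖toLp 2 (v τ)‖ ≤ ‖toLp 2 (v ζ)‖ * exp ((|s.re| * a + b) * (ζ - τ)) := by
  refine norm_le_mul_exp_of_abs_inner_deriv_le hτζ
    (fun t ht => (PiLp.hasFDerivAt_toLp (𝕜 := ℝ) 2 (v t)).comp_hasDerivWithinAt t (hv t ht))
    fun t ht => (abs_inner_smul_mulVec_add_mulVec_le (hD t ht) s (v t)).trans ?_
  exact mul_le_mul_of_nonneg_right (by gcongr; exacts [hDa t ht, hBb t ht]) (sq_nonneg _)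

theorem norm_toLp_le_mul_norm_toLp_conjTranspose_inv_mulVec {𝕜 : Type*} [RCLike 𝕜]
    {S : Matrix ι ι 𝕜} (hS : IsUnit S) (w : ι → 𝕜) :
    ‖toLp 2 w‖ ≤ ‖S‖ * ‖toLp 2 (S⁻¹ᴴ *ᵥ w)‖ := by
  have hSS : Sᴴ * S⁻¹ᴴ = 1 := by
    rw [← conjTranspose_mul, nonsing_inv_mul _ ((isUnit_iff_isUnit_det S).1 hS),
      conjTranspose_one]
  simpa [mulVec_mulVec, hSS, l2_opNorm_conjTranspose] using
    l2_opNorm_mulVec Sᴴ (toLp 2 (S⁻¹ᴴ *ᵥ w))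

theorem norm_toLp_conjTranspose_inv_mulVec_le {𝕜 : Type*} [RCLike 𝕜] (S : Matrix ι ι 𝕜)
    (w : ι → 𝕜) : ‖toLp 2 (S⁻¹ᴴ *ᵥ w)‖ ≤ ‖S⁻¹‖ * ‖toLp 2 w‖ := by
  simpa [l2_opNorm_conjTranspose] using l2_opNorm_mulVec S⁻¹ᴴ (toLp 2 w)

theorem norm_toLp_le_of_norm_toLp_conjTranspose_inv_mulVec_le {𝕜 : Type*} [RCLike 𝕜]
    {S S₀ : Matrix ι ι 𝕜} {w w₀ : ι → 𝕜} {K K' e : ℝ} (hS : IsUnit S) (hSK : ‖S‖ ≤ K)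
    (hS₀K' : ‖S₀⁻¹‖ ≤ K') (he : 0 ≤ e) (h : ‖toLp 2 (S⁻¹ᴴ *ᵥ w)‖ ≤ ‖toLp 2 (S₀⁻¹ᴴ *ᵥ w₀)‖ * e) :
    ‖toLp 2 w‖ ≤ K * K' * e * ‖toLp 2 w₀‖ :=
  calc ‖toLp 2 w‖ ≤ ‖S‖ * ‖toLp 2 (S⁻¹ᴴ *ᵥ w)‖ :=
        norm_toLp_le_mul_norm_toLp_conjTranspose_inv_mulVec hS w
    _ ≤ K * (‖toLp 2 (S₀⁻¹ᴴ *ᵥ w₀)‖ * e) := by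
        gcongr
        exact (norm_nonneg _).trans hSK
    _ ≤ K * (K' * ‖toLp 2 w₀‖ * e) := by
        gcongr
        · exact (norm_nonneg _).trans hSK
        · exact (norm_toLp_conjTranspose_inv_mulVec_le _ _).trans (by gcongr)
    _ = K * K' * e * ‖toLp 2 w₀‖ := by ring

theorem norm_toLp_le_of_hasDerivWithinAt_conjTranspose_inv_mulVec
    {S D B : ℝ → Matrix ι ι ℂ} {w : ℝ → ι → ℂ} {s : ℂ} {u : Set ℝ} {K K' a b τ ζ : ℝ}
    (hτζ : τ ≤ ζ) (hu : Icc τ ζ ⊆ u) (hS : ∀ t ∈ u, IsUnit (S t)) (hSK : ∀ t ∈ u, ‖S t‖ ≤ K)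
    (hSK' : ∀ t ∈ u, ‖(S t)⁻¹‖ ≤ K') (hD : ∀ t ∈ u, (D t).IsHermitian)
    (hDa : ∀ t ∈ u, ‖D t‖ ≤ a) (hBb : ∀ t ∈ u, ‖B t‖ ≤ b)
    (hv : ∀ t ∈ u, HasDerivWithinAt (fun t => (S t)⁻¹ᴴ *ᵥ w t)
      (s • (D t *ᵥ ((S t)⁻¹ᴴ *ᵥ w t)) + B t *ᵥ ((S t)⁻¹ᴴ *ᵥ w t)) u t) :
    ‖toLp 2 (w ζ)‖ ≤ K * K' * exp ((|s.re| * a + b) * (ζ - τ)) * ‖toLp 2 (w τ)‖ ∧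
      ‖toLp 2 (w τ)‖ ≤ K * K' * exp ((|s.re| * a + b) * (ζ - τ)) * ‖toLp 2 (w ζ)‖ := by
  obtain ⟨hup, hdown⟩ := norm_toLp_le_mul_exp_of_hasDerivWithinAt hτζ (fun t ht => hD t (hu ht))
    (fun t ht => hDa t (hu ht)) (fun t ht => hBb t (hu ht)) (fun t ht => (hv t (hu ht)).mono hu)
  have hτ := hu (left_mem_Icc.2 hτζ)
  have hζ := hu (right_mem_Icc.2 hτζ)
  exact ⟨norm_toLp_le_of_norm_toLp_conjTranspose_inv_mulVec_le (hS ζ hζ) (hSK ζ hζ) (hSK' τ hτ)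
      (exp_pos _).le hup,
    norm_toLp_le_of_norm_toLp_conjTranspose_inv_mulVec_le (hS τ hτ) (hSK τ hτ) (hSK' ζ hζ)
      (exp_pos _).le hdown⟩

end

theorem uniform_solution_estimates_general
    (n : ℕ)
    (P₁ : Matrix (Fin n) (Fin n) ℂ) (hP₁herm : P₁.IsHermitian) (hP₁inv : IsUnit P₁)
    (G₀ : Matrix (Fin n) (Fin n) ℂ)
    (H : ℝ → Matrix (Fin n) (Fin n) ℂ)
    (hHherm : ∀ ζ ∈ Set.Icc (0 : ℝ) 1, (H ζ).IsHermitian)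
    (hHpos : ∀ ζ ∈ Set.Icc (0 : ℝ) 1, (H ζ).PosDef)
    -- the diagonalization `P₁H(ζ) = S(ζ)⁻¹ Δ(ζ) S(ζ)` with `S, S⁻¹, Δ` continuously
    -- differentiable and `Δ(ζ)` diagonal with real entries
    (S Δ S' Δ' Sinv' : ℝ → Matrix (Fin n) (Fin n) ℂ)
    (hS' : ∀ i j, ∀ ζ ∈ Set.Icc (0 : ℝ) 1,
      HasDerivWithinAt (fun ξ => S ξ i j) (S' ζ i j) (Set.Icc 0 1) ζ)
    (hΔ' : ∀ i j, ∀ ζ ∈ Set.Icc (0 : ℝ) 1,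
      HasDerivWithinAt (fun ξ => Δ ξ i j) (Δ' ζ i j) (Set.Icc 0 1) ζ)
    (hSinv' : ∀ i j, ∀ ζ ∈ Set.Icc (0 : ℝ) 1,
      HasDerivWithinAt (fun ξ => (S ξ)⁻¹ i j) (Sinv' ζ i j) (Set.Icc 0 1) ζ)
    (hSinv'cont : ∀ i j, ContinuousOn (fun ζ => Sinv' ζ i j) (Set.Icc 0 1))
    (hSunit : ∀ ζ ∈ Set.Icc (0 : ℝ) 1, IsUnit (S ζ))
    (hΔunit : ∀ ζ ∈ Set.Icc (0 : ℝ) 1, IsUnit (Δ ζ))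
    (d : Fin n → ℝ → ℝ)
    (hΔdiag : ∀ ζ ∈ Set.Icc (0 : ℝ) 1, Δ ζ = Matrix.diagonal (fun k => ((d k ζ : ℝ) : ℂ)))
    (hdiagz : ∀ ζ ∈ Set.Icc (0 : ℝ) 1, P₁ * H ζ = (S ζ)⁻¹ * Δ ζ * S ζ) :
    ∃ M > (0 : ℝ), ∃ Mt > (0 : ℝ), ∃ c₀ ≥ (0 : ℝ), ∃ ct₀ ≥ (0 : ℝ),
      ∀ (s : ℂ) (x w w' : ℝ → Fin n → ℂ),
        (∀ ζ ∈ Set.Icc (0 : ℝ) 1, w ζ = (H ζ) *ᵥ x ζ) →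
        (∀ ζ ∈ Set.Icc (0 : ℝ) 1, HasDerivWithinAt w (w' ζ) (Set.Icc 0 1) ζ) →
        ContinuousOn w' (Set.Icc 0 1) →
        (∀ ζ ∈ Set.Icc (0 : ℝ) 1, s • x ζ = P₁ *ᵥ w' ζ + G₀ *ᵥ w ζ) →
        ∀ τ ζ : ℝ, 0 ≤ τ → τ ≤ ζ → ζ ≤ 1 →
          Mt * Real.exp (-|s.re| * ct₀ * (ζ - τ)) *
              ‖(EuclideanSpace.equiv (Fin n) ℂ).symm (w τ)‖ ≤
            ‖(EuclideanSpace.equiv (Fin n) ℂ).symm (w ζ)‖ ∧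
          ‖(EuclideanSpace.equiv (Fin n) ℂ).symm (w ζ)‖ ≤
            M * Real.exp (|s.re| * c₀ * (ζ - τ)) *
              ‖(EuclideanSpace.equiv (Fin n) ℂ).symm (w τ)‖ := by
  have hΔ_herm : ∀ t ∈ Icc (0 : ℝ) 1, (Δ t).IsHermitian := fun t ht => by
    rw [hΔdiag t ht]
    exact isHermitian_diagonal_iff.2 fun k => Complex.conj_ofReal _
  have hS_cont := continuousOn_matrix_of_hasDerivWithinAt hS'
  have hSinv_cont := continuousOn_matrix_of_hasDerivWithinAt hSinv'
  have hSinv'_cont := continuousOn_matrix hSinv'cont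
  obtain ⟨K, hK0, hK⟩ := isCompact_Icc.exists_pos_bound_of_continuousOn_matrix hS_cont
  obtain ⟨K', hK'0, hK'⟩ := isCompact_Icc.exists_pos_bound_of_continuousOn_matrix hSinv_cont
  obtain ⟨a, ha0, ha⟩ := isCompact_Icc.exists_pos_bound_of_continuousOn_matrix
    ((continuousOn_matrix_of_hasDerivWithinAt hΔ').matrix_inv hΔunit)
  obtain ⟨b, hb0, hb⟩ := isCompact_Icc.exists_pos_bound_of_continuousOn_matrix
    (A := fun t => (Sinv' t)ᴴ * (S t)ᴴ - (S t)⁻¹ᴴ * P₁⁻¹ * G₀ * (S t)ᴴ) (by fun_prop)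
  refine ⟨K * K' * exp b, by positivity, (K * K' * exp b)⁻¹, by positivity, a, ha0.le, a, ha0.le,
    fun s x w w' hw hw' _ heq τ ζ hτ hτζ hζ => ?_⟩
  have hv : ∀ t ∈ Icc (0 : ℝ) 1, HasDerivWithinAt (fun t => (S t)⁻¹ᴴ *ᵥ w t)
      (s • ((Δ t)⁻¹ *ᵥ ((S t)⁻¹ᴴ *ᵥ w t)) + ((Sinv' t)ᴴ * (S t)ᴴ - (S t)⁻¹ᴴ * P₁⁻¹ * G₀ * (S t)ᴴ)
        *ᵥ ((S t)⁻¹ᴴ *ᵥ w t)) (Icc 0 1) t := fun t ht =>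
    (HasDerivWithinAt.matrix_mulVec (fun i j => (hSinv' j i t ht).star) (hw' t ht)).congr_deriv
      (mulVec_add_conjTranspose_inv_mulVec_eq _ hP₁inv (hHpos t ht).isUnit (hSunit t ht)
        (inv_mul_inv_eq_of_mul_eq_inv_mul_mul hP₁herm (hHherm t ht) (hΔ_herm t ht) (hSunit t ht)
          (hdiagz t ht)) (hw t ht) (heq t ht))
  obtain ⟨hup, hdown⟩ := norm_toLp_le_of_hasDerivWithinAt_conjTranspose_inv_mulVec hτζ
    (Icc_subset_Icc hτ hζ) hSunit hK hK' (fun t ht => (hΔ_herm t ht).inv) ha hb hv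
  have hexp : K * K' * exp ((|s.re| * a + b) * (ζ - τ)) ≤
      K * K' * exp b * exp (|s.re| * a * (ζ - τ)) := by
    rw [mul_assoc _ (exp b), ← exp_add]
    gcongr
    nlinarith
  refine ⟨?_, hup.trans (mul_le_mul_of_nonneg_right hexp (norm_nonneg _))⟩
  rw [neg_mul, neg_mul]
  exact inv_mul_exp_neg_mul_le_of_le_mul_exp (by positivity)
    (hdown.trans (mul_le_mul_of_nonneg_right hexp (norm_nonneg _)))

/-- Lemma 5.2, uniform solution estimates: there exist constants
`M, M̃ > 0` and `c₀, c̃₀ ≥ 0`, independent of `s`, such that every solution `w = Hx` of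
`s·x = P₁ w′ + G₀ w` on `[0,1]` satisfies, for `0 ≤ τ ≤ ζ ≤ 1`,
`M̃·e^{−|Re s|·c̃₀·(ζ−τ)}·‖w(τ)‖ ≤ ‖w(ζ)‖ ≤ M·e^{|Re s|·c₀·(ζ−τ)}·‖w(τ)‖`
(Euclidean norms on `ℂⁿ`). -/
theorem uniform_solution_estimates
    (n : ℕ) (hn : 0 < n)
    (P₁ : Matrix (Fin n) (Fin n) ℂ) (hP₁herm : P₁.IsHermitian) (hP₁inv : IsUnit P₁)
    (G₀ : Matrix (Fin n) (Fin n) ℂ)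
    (H : ℝ → Matrix (Fin n) (Fin n) ℂ)
    (hHcont : ∀ i j, ContinuousOn (fun ζ => H ζ i j) (Set.Icc 0 1))
    (hHherm : ∀ ζ ∈ Set.Icc (0 : ℝ) 1, (H ζ).IsHermitian)
    (hHpos : ∀ ζ ∈ Set.Icc (0 : ℝ) 1, (H ζ).PosDef)
    -- the diagonalization `P₁H(ζ) = S(ζ)⁻¹ Δ(ζ) S(ζ)` with `S, S⁻¹, Δ` continuously
    -- differentiable and `Δ(ζ)` diagonal with real entries
    (S Δ S' Δ' Sinv' : ℝ → Matrix (Fin n) (Fin n) ℂ)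
    (hS' : ∀ i j, ∀ ζ ∈ Set.Icc (0 : ℝ) 1,
      HasDerivWithinAt (fun ξ => S ξ i j) (S' ζ i j) (Set.Icc 0 1) ζ)
    (hS'cont : ∀ i j, ContinuousOn (fun ζ => S' ζ i j) (Set.Icc 0 1))
    (hΔ' : ∀ i j, ∀ ζ ∈ Set.Icc (0 : ℝ) 1,
      HasDerivWithinAt (fun ξ => Δ ξ i j) (Δ' ζ i j) (Set.Icc 0 1) ζ)
    (hΔ'cont : ∀ i j, ContinuousOn (fun ζ => Δ' ζ i j) (Set.Icc 0 1))
    (hSinv' : ∀ i j, ∀ ζ ∈ Set.Icc (0 : ℝ) 1,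
      HasDerivWithinAt (fun ξ => (S ξ)⁻¹ i j) (Sinv' ζ i j) (Set.Icc 0 1) ζ)
    (hSinv'cont : ∀ i j, ContinuousOn (fun ζ => Sinv' ζ i j) (Set.Icc 0 1))
    (hSunit : ∀ ζ ∈ Set.Icc (0 : ℝ) 1, IsUnit (S ζ))
    (hΔunit : ∀ ζ ∈ Set.Icc (0 : ℝ) 1, IsUnit (Δ ζ))
    (d : Fin n → ℝ → ℝ)
    (hΔdiag : ∀ ζ ∈ Set.Icc (0 : ℝ) 1, Δ ζ = Matrix.diagonal (fun k => ((d k ζ : ℝ) : ℂ)))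
    (hdiagz : ∀ ζ ∈ Set.Icc (0 : ℝ) 1, P₁ * H ζ = (S ζ)⁻¹ * Δ ζ * S ζ) :
    ∃ M > (0 : ℝ), ∃ Mt > (0 : ℝ), ∃ c₀ ≥ (0 : ℝ), ∃ ct₀ ≥ (0 : ℝ),
      ∀ (s : ℂ) (x w w' : ℝ → Fin n → ℂ),
        (∀ ζ ∈ Set.Icc (0 : ℝ) 1, w ζ = (H ζ) *ᵥ x ζ) →
        (∀ ζ ∈ Set.Icc (0 : ℝ) 1, HasDerivWithinAt w (w' ζ) (Set.Icc 0 1) ζ) →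
        ContinuousOn w' (Set.Icc 0 1) →
        (∀ ζ ∈ Set.Icc (0 : ℝ) 1, s • x ζ = P₁ *ᵥ w' ζ + G₀ *ᵥ w ζ) →
        ∀ τ ζ : ℝ, 0 ≤ τ → τ ≤ ζ → ζ ≤ 1 →
          Mt * Real.exp (-|s.re| * ct₀ * (ζ - τ)) *
              ‖(EuclideanSpace.equiv (Fin n) ℂ).symm (w τ)‖ ≤
            ‖(EuclideanSpace.equiv (Fin n) ℂ).symm (w ζ)‖ ∧
          ‖(EuclideanSpace.equiv (Fin n) ℂ).symm (w ζ)‖ ≤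
            M * Real.exp (|s.re| * c₀ * (ζ - τ)) *
              ‖(EuclideanSpace.equiv (Fin n) ℂ).symm (w τ)‖ :=
  uniform_solution_estimates_general n P₁ hP₁herm hP₁inv G₀ H hHherm hHpos S Δ S' Δ' Sinv' hS' hΔ'
    hSinv' hSinv'cont hSunit hΔunit d hΔdiag hdiagz
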